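/- Let γ ∈ (0, √2). For real α < −γ/2 the integral H(α) := ∫_{0}^{1} ∫_{0}^{1} x₁^{−γα/2 − 1} x₂^{−γα/2 − 1} |x₁ − x₂|^{−γ²/2} dx₁ dx₂ converges absolutely. Then lim_{α ↗ −γ/2} (α + γ/2)·H(α) = −(2/γ) · Γ(γ²/4) Γ(1 − γ²/2) / Γ(1 − γ²/4). -/

import Mathlib

/-!
With `a = -γα/2` and `b = 1 - γ²/2` the integrand is `x^(a-1) y^(a-1) |x - y|^(b-1)`, which is
symmetric in `x, y`, so `H` is twice its integral over the triangle `0 < y < x < 1`. The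
substitution `(x, y) = (s, s t)`, with Jacobian `s`, maps the unit square onto this triangle and
turns the integrand into the product `s^(2a+b-2) · t^(a-1) (1-t)^(b-1)`; hence
`H = 2 B(a, b) / (2a + b - 1)`. As `2a + b - 1 = -γ (α + γ/2)`, this gives
`(α + γ/2) H = -(2/γ) B(a, b)`, and the limit follows from the continuity of the Beta function
at `a = γ²/4`.
-/

open MeasureTheory Set

noncomputable def Hintegrand (γ α : ℝ) (p : ℝ × ℝ) : ℝ :=
  p.1 ^ (-(γ * α) / 2 - 1) * p.2 ^ (-(γ * α) / 2 - 1) *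
    |p.1 - p.2| ^ (-(γ ^ 2) / 2)

noncomputable def H (γ α : ℝ) : ℝ :=
  ∫ p in (Ioo (0 : ℝ) 1) ×ˢ (Ioo (0 : ℝ) 1), Hintegrand γ α p

open Filter Topology ProbabilityTheory

theorem ofReal_betaIntegrand {a b x : ℝ} (hx₀ : 0 ≤ x) (hx₁ : x ≤ 1) :
    (x : ℂ) ^ ((a : ℂ) - 1) * (1 - (x : ℂ)) ^ ((b : ℂ) - 1) =
      ((x ^ (a - 1) * (1 - x) ^ (b - 1) : ℝ) : ℂ) := by
  rw [Complex.ofReal_mul, Complex.ofReal_cpow hx₀, Complex.ofReal_cpow (sub_nonneg.2 hx₁)]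
  push_cast
  rfl

theorem integrableOn_rpow_mul_one_sub_rpow {a b : ℝ} (ha : 0 < a) (hb : 0 < b) :
    IntegrableOn (fun t : ℝ => t ^ (a - 1) * (1 - t) ^ (b - 1)) (Ioo 0 1) := by
  have h := Complex.betaIntegral_convergent (u := a) (v := b) (by simpa) (by simpa)
  rw [intervalIntegrable_iff_integrableOn_Ioo_of_le zero_le_one] at h
  refine IntegrableOn.congr_fun h.re (fun x hx => ?_) measurableSet_Ioo
  simp only [RCLike.re_to_complex, ofReal_betaIntegrand hx.1.le hx.2.le, Complex.ofReal_re]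

theorem integral_rpow_mul_one_sub_rpow {a b : ℝ} (ha : 0 < a) (hb : 0 < b) :
    ∫ t in Ioo (0 : ℝ) 1, t ^ (a - 1) * (1 - t) ^ (b - 1) = beta a b := by
  rw [beta_eq_betaIntegralReal a b ha hb, Complex.betaIntegral,
    intervalIntegral.integral_of_le zero_le_one, integral_Ioc_eq_integral_Ioo,
    setIntegral_congr_fun measurableSet_Ioo fun x hx => ofReal_betaIntegrand hx.1.le hx.2.le,
    integral_complex_ofReal, Complex.ofReal_re]

theorem continuousAt_beta_left {a b : ℝ} (ha : 0 < a) (hb : 0 < b) :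
    ContinuousAt (fun x => beta x b) a := by
  have hΓ : ∀ {s : ℝ}, 0 < s → ContinuousAt Real.Gamma s := fun hs =>
    Real.differentiableOn_Gamma_Ioi.continuousOn.continuousAt (Ioi_mem_nhds hs)
  exact ((hΓ ha).mul continuousAt_const).div
    ((hΓ (add_pos ha hb)).comp (f := fun x => x + b) (by fun_prop))
    (Real.Gamma_pos_of_pos (add_pos ha hb)).ne'

theorem integral_Ioo_zero_one_rpow {r : ℝ} (hr : -1 < r) :
    ∫ x in Ioo (0 : ℝ) 1, x ^ r = 1 / (r + 1) := by
  rw [← integral_Ioc_eq_integral_Ioo, ← intervalIntegral.integral_of_le zero_le_one,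
    integral_rpow (Or.inl hr), Real.one_rpow, Real.zero_rpow (by linarith)]
  ring

def scaleSndByFst (p : ℝ × ℝ) : ℝ × ℝ := (p.1, p.1 * p.2)

noncomputable def fderivScaleSndByFst (p : ℝ × ℝ) : ℝ × ℝ →L[ℝ] ℝ × ℝ :=
  (Matrix.toLin (.finTwoProd ℝ) (.finTwoProd ℝ) !![1, 0; p.2, p.1]).toContinuousLinearMap

theorem hasFDerivAt_scaleSndByFst (p : ℝ × ℝ) :
    HasFDerivAt scaleSndByFst (fderivScaleSndByFst p) p := by
  refine (hasFDerivAt_fst.prodMk (hasFDerivAt_fst.fun_mul hasFDerivAt_snd)).congr_fderiv ?_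
  rw [fderivScaleSndByFst, Matrix.toLin_finTwoProd_toContinuousLinearMap]
  ext <;> simp

theorem det_fderivScaleSndByFst (p : ℝ × ℝ) : (fderivScaleSndByFst p).det = p.1 := by
  simp [fderivScaleSndByFst, LinearMap.det_toContinuousLinearMap, LinearMap.det_toLin,
    Matrix.det_fin_two_of]

theorem injOn_scaleSndByFst : InjOn scaleSndByFst {p | p.1 ≠ 0} := by
  rintro ⟨s, t⟩ hs ⟨s', t'⟩ - h
  simp only [scaleSndByFst, Prod.mk.injEq] at h
  obtain ⟨rfl, h⟩ := h
  exact Prod.ext rfl (mul_left_cancel₀ hs h)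

def lowerTriangle : Set (ℝ × ℝ) := {p | 0 < p.2 ∧ p.2 < p.1 ∧ p.1 < 1}

theorem scaleSndByFst_image_unitSquare :
    scaleSndByFst '' (Ioo 0 1 ×ˢ Ioo 0 1) = lowerTriangle := by
  ext ⟨x, y⟩
  simp only [scaleSndByFst, mem_image, mem_prod, mem_Ioo, Prod.exists, Prod.mk.injEq,
    lowerTriangle, mem_ofPred_eq]
  constructor
  · rintro ⟨s, t, ⟨⟨hs₀, hs₁⟩, ht₀, ht₁⟩, rfl, rfl⟩
    exact ⟨mul_pos hs₀ ht₀, mul_lt_of_lt_one_right hs₀ ht₁, hs₁⟩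
  · rintro ⟨hy, hyx, hx⟩
    have hx₀ : 0 < x := hy.trans hyx
    exact ⟨x, y / x, ⟨⟨hx₀, hx⟩, div_pos hy hx₀, (div_lt_one hx₀).2 hyx⟩, rfl,
      mul_div_cancel₀ y hx₀.ne'⟩

theorem integrableOn_lowerTriangle_iff (g : ℝ × ℝ → ℝ) :
    IntegrableOn g lowerTriangle ↔
      IntegrableOn (fun p => p.1 * g (scaleSndByFst p)) (Ioo 0 1 ×ˢ Ioo 0 1) := by
  rw [← scaleSndByFst_image_unitSquare,
    integrableOn_image_iff_integrableOn_abs_det_fderiv_smul volume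
      (measurableSet_Ioo.prod measurableSet_Ioo)
      (fun p _ => (hasFDerivAt_scaleSndByFst p).hasFDerivWithinAt)
      (injOn_scaleSndByFst.mono fun p hp => hp.1.1.ne')]
  exact integrableOn_congr_fun (fun p hp => by simp [det_fderivScaleSndByFst, abs_of_pos hp.1.1])
    (measurableSet_Ioo.prod measurableSet_Ioo)

theorem integral_lowerTriangle (g : ℝ × ℝ → ℝ) :
    ∫ p in lowerTriangle, g p = ∫ p in Ioo 0 1 ×ˢ Ioo 0 1, p.1 * g (scaleSndByFst p) := by
  rw [← scaleSndByFst_image_unitSquare,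
    integral_image_eq_integral_abs_det_fderiv_smul volume
      (measurableSet_Ioo.prod measurableSet_Ioo)
      (fun p _ => (hasFDerivAt_scaleSndByFst p).hasFDerivWithinAt)
      (injOn_scaleSndByFst.mono fun p hp => hp.1.1.ne')]
  exact setIntegral_congr_fun (measurableSet_Ioo.prod measurableSet_Ioo)
    fun p hp => by simp [det_fderivScaleSndByFst, abs_of_pos hp.1.1]

noncomputable def pairIntegrand (a b : ℝ) (p : ℝ × ℝ) : ℝ :=
  p.1 ^ (a - 1) * p.2 ^ (a - 1) * |p.1 - p.2| ^ (b - 1)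

theorem pairIntegrand_swap (a b : ℝ) (p : ℝ × ℝ) :
    pairIntegrand a b p.swap = pairIntegrand a b p := by
  simp only [pairIntegrand, Prod.fst_swap, Prod.snd_swap, abs_sub_comm]
  ring

theorem mul_pairIntegrand_scaleSndByFst (a b : ℝ) {p : ℝ × ℝ} (hp : p ∈ Ioo 0 1 ×ˢ Ioo 0 1) :
    p.1 * pairIntegrand a b (scaleSndByFst p) =
      p.1 ^ (2 * a + b - 2) * (p.2 ^ (a - 1) * (1 - p.2) ^ (b - 1)) := by
  obtain ⟨s, t⟩ := p
  obtain ⟨⟨hs₀, -⟩, ht₀, ht₁⟩ := hp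
  have hsub : s - s * t = s * (1 - t) := by ring
  rw [pairIntegrand, scaleSndByFst, hsub, abs_of_pos (by nlinarith), Real.mul_rpow hs₀.le ht₀.le,
    Real.mul_rpow hs₀.le (by linarith),
    show 2 * a + b - 2 = 1 + (a - 1) + (a - 1) + (b - 1) by ring,
    Real.rpow_add hs₀, Real.rpow_add hs₀, Real.rpow_add hs₀, Real.rpow_one]
  ring

theorem measurableSet_lowerTriangle : MeasurableSet lowerTriangle :=
  (measurableSet_lt measurable_const measurable_snd).inter
    ((measurableSet_lt measurable_snd measurable_fst).inter
      (measurableSet_lt measurable_fst measurable_const))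

theorem volume_diagonal_eq_zero : volume (diagonal ℝ) = 0 := by
  rw [Measure.volume_eq_prod, Measure.measure_prod_null measurableSet_diagonal]
  refine Filter.Eventually.of_forall fun x => ?_
  have : Prod.mk x ⁻¹' diagonal ℝ = {x} := by
    ext y
    simp [eq_comm]
  simp [this]

theorem unitSquare_ae_eq_union :
    (Ioo 0 1 ×ˢ Ioo 0 1 : Set (ℝ × ℝ)) =ᵐ[volume]
      (lowerTriangle ∪ Prod.swap ⁻¹' lowerTriangle : Set (ℝ × ℝ)) := by
  have hsub : lowerTriangle ∪ Prod.swap ⁻¹' lowerTriangle ⊆ Ioo 0 1 ×ˢ Ioo (0 : ℝ) 1 := by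
    rintro ⟨x, y⟩ h
    simp only [lowerTriangle, mem_union, mem_preimage, mem_ofPred_eq, Prod.swap_prod_mk] at h
    rcases h with ⟨_, _, _⟩ | ⟨_, _, _⟩ <;>
      exact ⟨⟨by linarith, by linarith⟩, by linarith, by linarith⟩
  have hdiag : Ioo 0 1 ×ˢ Ioo (0 : ℝ) 1 \ (lowerTriangle ∪ Prod.swap ⁻¹' lowerTriangle) ⊆
      diagonal ℝ := by
    rintro ⟨x, y⟩ ⟨⟨⟨hx₀, hx₁⟩, hy₀, hy₁⟩, h⟩
    simp only [lowerTriangle, mem_union, mem_preimage, mem_ofPred_eq, Prod.fst_swap,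
      Prod.snd_swap] at h
    simp only [mem_diagonal_iff]
    by_contra hne
    rcases lt_or_gt_of_ne hne with hlt | hlt <;> tauto
  refine ae_eq_set.2 ⟨measure_mono_null hdiag volume_diagonal_eq_zero, ?_⟩
  rw [sdiff_eq_empty.2 hsub, measure_empty]

theorem measurePreserving_swap_volume :
    MeasurePreserving (Prod.swap : ℝ × ℝ → ℝ × ℝ) := by
  rw [Measure.volume_eq_prod]
  exact Measure.measurePreserving_swap

section Symmetric

variable {f : ℝ × ℝ → ℝ} (hf : ∀ p, f p.swap = f p)
include hf

theorem integrableOn_swap_preimage_iff {s : Set (ℝ × ℝ)} :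
    IntegrableOn f (Prod.swap ⁻¹' s) ↔ IntegrableOn f s := by
  simpa only [Function.comp_def, hf] using
    measurePreserving_swap_volume.integrableOn_comp_preimage (f := f) (s := s)
      MeasurableEquiv.prodComm.measurableEmbedding

theorem setIntegral_swap_preimage (s : Set (ℝ × ℝ)) :
    ∫ p in Prod.swap ⁻¹' s, f p = ∫ p in s, f p := by
  simpa only [hf] using measurePreserving_swap_volume.setIntegral_preimage_emb
    MeasurableEquiv.prodComm.measurableEmbedding f s

theorem integrableOn_unitSquare_of_lowerTriangle (h : IntegrableOn f lowerTriangle) :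
    IntegrableOn f (Ioo 0 1 ×ˢ Ioo 0 1) :=
  (h.union ((integrableOn_swap_preimage_iff hf).2 h)).congr_set_ae unitSquare_ae_eq_union

theorem integral_unitSquare_eq_two_mul_lowerTriangle (h : IntegrableOn f lowerTriangle) :
    ∫ p in Ioo 0 1 ×ˢ Ioo 0 1, f p = 2 * ∫ p in lowerTriangle, f p := by
  have hdisj : Disjoint lowerTriangle (Prod.swap ⁻¹' lowerTriangle) :=
    disjoint_left.2 fun p hp hp' => lt_asymm hp.2.1 hp'.2.1
  rw [setIntegral_congr_set unitSquare_ae_eq_union,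
    setIntegral_union hdisj (measurableSet_lowerTriangle.preimage measurable_swap) h
      ((integrableOn_swap_preimage_iff hf).2 h), setIntegral_swap_preimage hf, two_mul]

end Symmetric

section PairIntegrand

variable {a b : ℝ} (ha : 0 < a) (hb : 0 < b) (hab : 1 < 2 * a + b)
include ha hb hab

theorem integrableOn_pairIntegrand_lowerTriangle :
    IntegrableOn (pairIntegrand a b) lowerTriangle := by
  rw [integrableOn_lowerTriangle_iff]
  have hpow : IntegrableOn (fun s : ℝ => s ^ (2 * a + b - 2)) (Ioo 0 1) :=
    (intervalIntegral.integrableOn_Ioo_rpow_iff zero_lt_one).2 (by linarith)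
  refine IntegrableOn.congr_fun ?_ (fun p hp => (mul_pairIntegrand_scaleSndByFst a b hp).symm)
    (measurableSet_Ioo.prod measurableSet_Ioo)
  rw [IntegrableOn, Measure.volume_eq_prod, ← Measure.prod_restrict]
  exact hpow.mul_prod (integrableOn_rpow_mul_one_sub_rpow ha hb)

theorem integral_pairIntegrand_lowerTriangle :
    ∫ p in lowerTriangle, pairIntegrand a b p = beta a b / (2 * a + b - 1) := by
  rw [integral_lowerTriangle,
    setIntegral_congr_fun (measurableSet_Ioo.prod measurableSet_Ioo)
      fun p hp => mul_pairIntegrand_scaleSndByFst a b hp,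
    Measure.volume_eq_prod,
    setIntegral_prod_mul (fun s => s ^ (2 * a + b - 2)) fun t => t ^ (a - 1) * (1 - t) ^ (b - 1),
    integral_Ioo_zero_one_rpow (by linarith), integral_rpow_mul_one_sub_rpow ha hb]
  ring

theorem integrableOn_pairIntegrand_unitSquare :
    IntegrableOn (pairIntegrand a b) (Ioo 0 1 ×ˢ Ioo 0 1) :=
  integrableOn_unitSquare_of_lowerTriangle (pairIntegrand_swap a b)
    (integrableOn_pairIntegrand_lowerTriangle ha hb hab)

theorem integral_pairIntegrand_unitSquare :
    ∫ p in Ioo 0 1 ×ˢ Ioo 0 1, pairIntegrand a b p = 2 * beta a b / (2 * a + b - 1) := by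
  rw [integral_unitSquare_eq_two_mul_lowerTriangle (pairIntegrand_swap a b)
    (integrableOn_pairIntegrand_lowerTriangle ha hb hab),
    integral_pairIntegrand_lowerTriangle ha hb hab, mul_div_assoc]

end PairIntegrand

theorem Hintegrand_eq_pairIntegrand (γ α : ℝ) :
    Hintegrand γ α = pairIntegrand (-(γ * α) / 2) (1 - γ ^ 2 / 2) := by
  ext p
  rw [Hintegrand, pairIntegrand, show -(γ ^ 2) / 2 = 1 - γ ^ 2 / 2 - 1 by ring]

theorem mul_H_eq_beta {γ α : ℝ} (hγ : 0 < γ) (hγ2 : γ ^ 2 < 2) (hα : α < -γ / 2) :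
    (α + γ / 2) * H γ α = -(2 / γ) * beta (-(γ * α) / 2) (1 - γ ^ 2 / 2) := by
  have hne : α * 2 + γ ≠ 0 := by linarith
  rw [H, Hintegrand_eq_pairIntegrand,
    integral_pairIntegrand_unitSquare (by nlinarith) (by linarith) (by nlinarith),
    show 2 * (-(γ * α) / 2) + (1 - γ ^ 2 / 2) - 1 = -γ * (α + γ / 2) by ring]
  field_simp

theorem stmt5 (γ : ℝ) (hγ0 : 0 < γ) (hγ2 : γ < Real.sqrt 2) :
    (∀ α : ℝ, α < -γ / 2 →
      IntegrableOn (Hintegrand γ α) ((Ioo (0 : ℝ) 1) ×ˢ (Ioo (0 : ℝ) 1)) volume) ∧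
    Filter.Tendsto (fun α : ℝ => (α + γ / 2) * H γ α)
      (nhdsWithin (-γ / 2) (Iio (-γ / 2)))
      (nhds (-(2 / γ) * Real.Gamma (γ ^ 2 / 4) * Real.Gamma (1 - γ ^ 2 / 2) /
        Real.Gamma (1 - γ ^ 2 / 4))) := by
  have hγsq : γ ^ 2 < 2 := (Real.lt_sqrt hγ0.le).1 hγ2
  have hb : 0 < 1 - γ ^ 2 / 2 := by linarith
  refine ⟨fun α hα => ?_, ?_⟩
  · rw [Hintegrand_eq_pairIntegrand]
    exact integrableOn_pairIntegrand_unitSquare (by nlinarith) hb (by nlinarith)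
  have hinner : Tendsto (fun α => -(γ * α) / 2) (𝓝[<] (-γ / 2)) (𝓝 (γ ^ 2 / 4)) :=
    ((by fun_prop : Continuous fun α : ℝ => -(γ * α) / 2).tendsto' _ _ (by ring)).mono_left
      nhdsWithin_le_nhds
  have hlim :=
    ((continuousAt_beta_left (by positivity) hb).tendsto.comp hinner).const_mul (-(2 / γ))
  have hvalue : -(2 / γ) * beta (γ ^ 2 / 4) (1 - γ ^ 2 / 2) =
      -(2 / γ) * Real.Gamma (γ ^ 2 / 4) * Real.Gamma (1 - γ ^ 2 / 2) /
        Real.Gamma (1 - γ ^ 2 / 4) := by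
    rw [beta, show γ ^ 2 / 4 + (1 - γ ^ 2 / 2) = 1 - γ ^ 2 / 4 by ring]
    ring
  rw [← hvalue]
  exact hlim.congr' (eventually_nhdsWithin_of_forall fun α hα =>
    (mul_H_eq_beta hγ0 hγsq hα).symm)
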